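/- For all integers k ≥ 1 and r ≥ 1, the local antimagic chromatic number of the edge-corona product of the star S_k with the empty graph on r vertices equals 3; that is, χ_la(S_k ⋄ K̄_r) = 3. -/

import Mathlib

/-!
Local antimagic (total) labelings and chromatic numbers, firecracker graphs,
stars, double stars, joins, and edge-corona products.
-/

open scoped Classical

noncomputable section

namespace LocalAntimagic

variable {V : Type*} [Fintype V]

/-- The weight of a vertex `u` under an edge labeling `f`: the sum of the
labels of the edges incident with `u`. -/
def weight (G : SimpleGraph V) (f : Sym2 V → ℕ) (u : V) : ℕ :=
  ∑ e ∈ G.edgeFinset, if u ∈ e then f e else 0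

/-- `f` is a local antimagic labeling of `G`: it maps the edge set of `G`
bijectively onto `{1, …, |E(G)|}` and adjacent vertices get distinct weights. -/
def IsLocalAntimagic (G : SimpleGraph V) (f : Sym2 V → ℕ) : Prop :=
  Set.BijOn f G.edgeSet (Set.Icc 1 G.edgeFinset.card) ∧
    ∀ u v, G.Adj u v → weight G f u ≠ weight G f v

/-- The number of distinct colors (vertex weights) induced by `f`. -/
def colorCount (G : SimpleGraph V) (f : Sym2 V → ℕ) : ℕ :=
  (Finset.univ.image (weight G f)).card

/-- The local antimagic chromatic number `χ_la(G)`: the least number of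
distinct induced colors over all local antimagic labelings of `G`. -/
def chiLA (G : SimpleGraph V) : ℕ :=
  sInf {c | ∃ f, IsLocalAntimagic G f ∧ colorCount G f = c}

/-- The total weight of a vertex `u` under a total labeling `(gv, ge)`:
`gv u` plus the sum of the labels of the edges incident with `u`. -/
def totalWeight (G : SimpleGraph V) (gv : V → ℕ) (ge : Sym2 V → ℕ) (u : V) : ℕ :=
  gv u + weight G ge u

/-- `(gv, ge)` is a local antimagic total labeling of `G`: together the vertex
labels and edge labels form a bijection from `V(G) ∪ E(G)` onto
`{1, …, |V(G)| + |E(G)|}`, and adjacent vertices get distinct total weights. -/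
def IsLocalAntimagicTotal (G : SimpleGraph V) (gv : V → ℕ) (ge : Sym2 V → ℕ) : Prop :=
  Set.BijOn (Sum.elim gv ge)
    (Set.range Sum.inl ∪ Sum.inr '' G.edgeSet)
    (Set.Icc 1 (Fintype.card V + G.edgeFinset.card)) ∧
    ∀ u v, G.Adj u v → totalWeight G gv ge u ≠ totalWeight G gv ge v

/-- The number of distinct colors (total vertex weights) induced by `(gv, ge)`. -/
def totalColorCount (G : SimpleGraph V) (gv : V → ℕ) (ge : Sym2 V → ℕ) : ℕ :=
  (Finset.univ.image (totalWeight G gv ge)).card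

/-- The local antimagic total chromatic number `χ_lat(G)`. -/
def chiLAT (G : SimpleGraph V) : ℕ :=
  sInf {c | ∃ gv ge, IsLocalAntimagicTotal G gv ge ∧ totalColorCount G gv ge = c}

/-- The star `S_k` with one center (`Sum.inl`) and `k` leaves (`Sum.inr`). -/
def star (k : ℕ) : SimpleGraph (Unit ⊕ Fin k) := completeBipartiteGraph Unit (Fin k)

/-- The edge-corona product `G ⋄ H`: take one copy of `G` and one disjoint
copy of `H` for each edge `e` of `G`, joining both endpoints of `e` to every
vertex of the copy of `H` assigned to `e`. -/
def edgeCorona {W : Type*} (G : SimpleGraph V) (H : SimpleGraph W) :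
    SimpleGraph (V ⊕ (G.edgeSet × W)) :=
  SimpleGraph.fromRel (fun a b =>
    match a, b with
    | Sum.inl u, Sum.inl v => G.Adj u v
    | Sum.inl u, Sum.inr (e, _) => u ∈ (e : Sym2 V)
    | Sum.inr (e, w), Sum.inr (e', w') => e = e' ∧ H.Adj w w'
    | _, _ => False)

/-!
The center, a leaf and an apex (a vertex of the copy of `K̄_r` on that leaf's spoke) form a
triangle, so at least three colors are needed.

For three colors, put `M = k r`. The two edges at each apex get a complementary pair
`c, 2M + 1 - c` with `c ∈ [1, M]`, so every apex has weight `2M + 1`, and the spokes get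
`2M + 1, …, 2M + k`. The apexes over leaf `i` form a row whose `j`-th entry uses
`c = k j + slot + 1`. If the leaf takes `c` on even columns and `2M + 1 - c` on odd ones, each
pair of columns `2p, 2p + 1` gives it `2M + 1 - k` whatever `i` is; the remaining column (`r` odd)
or two columns (`r` even) are permuted within their blocks so that, together with the spoke, all
leaves get the same weight. That weight exceeds `2M + 1`, and on the row of leaf `0` the
center–apex labels outweigh the leaf–apex labels, so the center is heavier still.
-/

open Finset Function

section General

variable {G : SimpleGraph V}

lemma card_le_colorCount_of_isClique {f : Sym2 V → ℕ}
    (hf : ∀ u v, G.Adj u v → weight G f u ≠ weight G f v) {s : Finset V}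
    (hs : G.IsClique (s : Set V)) : #s ≤ colorCount G f := by
  have hinj : Set.InjOn (weight G f) s := fun u hu v hv huv => by
    by_contra hne
    exact hf u v (hs hu hv hne) huv
  rw [colorCount, ← card_image_of_injOn hinj]
  exact card_le_card (image_subset_image (subset_univ s))

lemma chiLA_eq_of_forall_le {f : Sym2 V → ℕ} {n : ℕ} (hf : IsLocalAntimagic G f)
    (hn : colorCount G f = n) (hle : ∀ g, IsLocalAntimagic G g → n ≤ colorCount G g) :
    chiLA G = n :=
  le_antisymm (Nat.sInf_le ⟨f, hf, hn⟩)
    (le_csInf ⟨n, f, hf, hn⟩ (by rintro _ ⟨g, hg, rfl⟩; exact hle g hg))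

variable {ι : Type*} [Fintype ι] {g : ι → Sym2 V}

lemma edgeFinset_eq_map (hg : Injective g) (hG : G.edgeSet = Set.range g) :
    G.edgeFinset = univ.map ⟨g, hg⟩ := by
  ext e
  simp [hG]

lemma weight_extend (hg : Injective g) (hG : G.edgeSet = Set.range g) (lab : ι → ℕ) (u : V) :
    weight G (extend g lab 0) u = ∑ x, if u ∈ g x then lab x else 0 := by
  simp [weight, edgeFinset_eq_map hg hG, hg.extend_apply]

lemma bijOn_extend (hg : Injective g) (hG : G.edgeSet = Set.range g) {lab : ι → ℕ}
    (hlab : Injective lab) (hmem : ∀ x, lab x ∈ Set.Icc 1 (Fintype.card ι)) :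
    Set.BijOn (extend g lab 0) G.edgeSet (Set.Icc 1 #G.edgeFinset) := by
  have himage : univ.image lab = Icc 1 (Fintype.card ι) :=
    eq_of_subset_of_card_le
      (fun n hn => by obtain ⟨x, -, rfl⟩ := mem_image.mp hn; simpa using hmem x)
      (by simp [card_image_of_injective _ hlab])
  rw [edgeFinset_eq_map hg hG, card_map, card_univ, hG]
  refine ⟨?_, ?_, ?_⟩
  · rintro _ ⟨x, rfl⟩
    simpa [hg.extend_apply] using hmem x
  · rintro _ ⟨x, rfl⟩ _ ⟨y, rfl⟩ h
    rw [hg.extend_apply, hg.extend_apply] at h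
    rw [hlab h]
  · intro n hn
    obtain ⟨x, -, rfl⟩ := mem_image.mp (himage ▸ mem_Icc.mpr hn : n ∈ univ.image lab)
    exact ⟨g x, ⟨x, rfl⟩, hg.extend_apply _ _ _⟩

end General

section StarCorona

variable {k r : ℕ}

abbrev StarCoronaVertex (k r : ℕ) := (Unit ⊕ Fin k) ⊕ ((star k).edgeSet × Fin r)

abbrev starCorona (k r : ℕ) : SimpleGraph (StarCoronaVertex k r) := edgeCorona (star k) ⊥

lemma star_adj (x y : Unit ⊕ Fin k) :
    (star k).Adj x y ↔ x.isLeft ∧ y.isRight ∨ x.isRight ∧ y.isLeft := Iff.rfl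

def spoke (i : Fin k) : (star k).edgeSet := ⟨s(.inl (), .inr i), by simp [star_adj]⟩

lemma spoke_injective : Injective (spoke (k := k)) := by
  intro i j h
  simpa [spoke] using congrArg Subtype.val h

lemma spoke_surjective : Surjective (spoke (k := k)) := by
  rintro ⟨e, he⟩
  induction e with
  | h a b =>
    rcases a with a | a <;> rcases b with b | b <;> simp [star_adj] at he
    · exact ⟨b, rfl⟩
    · exact ⟨a, Subtype.ext Sym2.eq_swap⟩

@[simp] lemma mem_spoke (x : Unit ⊕ Fin k) (i : Fin k) :
    x ∈ (spoke i : Sym2 (Unit ⊕ Fin k)) ↔ x = .inl () ∨ x = .inr i := by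
  simp [spoke]

abbrev center : StarCoronaVertex k r := .inl (.inl ())

abbrev leaf (i : Fin k) : StarCoronaVertex k r := .inl (.inr i)

abbrev apex (i : Fin k) (w : Fin r) : StarCoronaVertex k r := .inr (spoke i, w)

lemma starCoronaVertex_cases (v : StarCoronaVertex k r) :
    v = center ∨ (∃ i, v = leaf i) ∨ ∃ i w, v = apex i w := by
  rcases v with (⟨⟩ | i) | ⟨e, w⟩
  · exact .inl rfl
  · exact .inr (.inl ⟨i, rfl⟩)
  · obtain ⟨i, rfl⟩ := spoke_surjective e
    exact .inr (.inr ⟨i, w, rfl⟩)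

@[simp] lemma starCorona_adj_inl_inl (x y : Unit ⊕ Fin k) :
    (starCorona k r).Adj (.inl x) (.inl y) ↔ (star k).Adj x y := by
  simp only [edgeCorona, SimpleGraph.fromRel_adj]
  exact ⟨fun h => h.2.elim id .symm, fun h => ⟨Sum.inl_injective.ne h.ne, .inl h⟩⟩

@[simp] lemma starCorona_adj_inl_inr (x : Unit ⊕ Fin k) (e : (star k).edgeSet) (w : Fin r) :
    (starCorona k r).Adj (.inl x) (.inr (e, w)) ↔ x ∈ (e : Sym2 (Unit ⊕ Fin k)) := by
  simp [edgeCorona]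

@[simp] lemma starCorona_adj_inr_inl (x : Unit ⊕ Fin k) (e : (star k).edgeSet) (w : Fin r) :
    (starCorona k r).Adj (.inr (e, w)) (.inl x) ↔ x ∈ (e : Sym2 (Unit ⊕ Fin k)) := by
  simp [edgeCorona]

@[simp] lemma starCorona_not_adj_inr_inr (p q : (star k).edgeSet × Fin r) :
    ¬(starCorona k r).Adj (.inr p) (.inr q) := by
  simp [edgeCorona]

def coronaEdge : Fin k ⊕ (Fin k × Fin r) ⊕ (Fin k × Fin r) → Sym2 (StarCoronaVertex k r)
  | .inl i => s(center, leaf i)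
  | .inr (.inl (i, w)) => s(center, apex i w)
  | .inr (.inr (i, w)) => s(leaf i, apex i w)

lemma coronaEdge_injective : Injective (coronaEdge (k := k) (r := r)) := by
  rintro (i | ⟨i, w⟩ | ⟨i, w⟩) (j | ⟨j, x⟩ | ⟨j, x⟩) h <;>
    simp_all [coronaEdge, spoke_injective.eq_iff]

lemma edgeSet_starCorona : (starCorona k r).edgeSet = Set.range coronaEdge := by
  ext e
  induction e with
  | h a b =>
    rw [SimpleGraph.mem_edgeSet, Set.mem_range]
    rcases starCoronaVertex_cases a with rfl | ⟨i, rfl⟩ | ⟨i, w, rfl⟩ <;>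
      rcases starCoronaVertex_cases b with rfl | ⟨j, rfl⟩ | ⟨j, x, rfl⟩
    all_goals simp [coronaEdge, star_adj, spoke_injective.eq_iff]

lemma three_le_colorCount_starCorona (i : Fin k) (w : Fin r)
    {f : Sym2 (StarCoronaVertex k r) → ℕ}
    (hf : ∀ u v, (starCorona k r).Adj u v →
      weight (starCorona k r) f u ≠ weight (starCorona k r) f v) :
    3 ≤ colorCount (starCorona k r) f := by
  have hclique : (starCorona k r).IsNClique 3 {center, leaf i, apex i w} :=
    SimpleGraph.is3Clique_triple_iff.mpr ⟨by simp [star_adj], by simp, by simp⟩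
  exact hclique.card_eq ▸ card_le_colorCount_of_isClique hf hclique.isClique

lemma weight_ne_of_adj_starCorona {f : Sym2 (StarCoronaVertex k r) → ℕ}
    (hcl : ∀ i, weight (starCorona k r) f center ≠ weight (starCorona k r) f (leaf i))
    (hca : ∀ i w, weight (starCorona k r) f center ≠ weight (starCorona k r) f (apex i w))
    (hla : ∀ i w, weight (starCorona k r) f (leaf i) ≠ weight (starCorona k r) f (apex i w))
    (u v : StarCoronaVertex k r) (huv : (starCorona k r).Adj u v) :
    weight (starCorona k r) f u ≠ weight (starCorona k r) f v := by
  have huv : s(u, v) ∈ Set.range coronaEdge := edgeSet_starCorona ▸ huv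
  obtain ⟨i | ⟨i, w⟩ | ⟨i, w⟩, he⟩ := huv <;>
    rcases Sym2.eq_iff.mp he with ⟨rfl, rfl⟩ | ⟨rfl, rfl⟩
  exacts [hcl i, (hcl i).symm, hca i w, (hca i w).symm, hla i w, (hla i w).symm]

def coronaLabeling (t : Fin k → ℕ) (a b : Fin k × Fin r → ℕ) :
    Sym2 (StarCoronaVertex k r) → ℕ :=
  extend coronaEdge (Sum.elim t (Sum.elim a b)) 0

variable (t : Fin k → ℕ) (a b : Fin k × Fin r → ℕ)

lemma weight_center :
    weight (starCorona k r) (coronaLabeling t a b) center = ∑ i, t i + ∑ p, a p := by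
  simp [coronaLabeling, weight_extend coronaEdge_injective edgeSet_starCorona,
    Fintype.sum_sum_type, coronaEdge]

lemma weight_leaf (i : Fin k) :
    weight (starCorona k r) (coronaLabeling t a b) (leaf i) = t i + ∑ w, b (i, w) := by
  simp only [coronaLabeling, weight_extend coronaEdge_injective edgeSet_starCorona, coronaEdge,
    Fintype.sum_sum_type, Fintype.sum_prod_type, Sym2.mem_iff, Sum.inl.injEq, Sum.inr.injEq,
    reduceCtorEq, or_false, false_or, or_self, Sum.elim_inl, Sum.elim_inr, sum_ite_eq, mem_univ,
    ↓reduceIte, sum_const_zero, zero_add, Nat.add_left_cancel_iff]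
  rw [sum_comm]
  simp

lemma weight_apex (i : Fin k) (w : Fin r) :
    weight (starCorona k r) (coronaLabeling t a b) (apex i w) = a (i, w) + b (i, w) := by
  have hiw (p : Fin k × Fin r) : (i = p.1 ∧ w = p.2) ↔ (i, w) = p :=
    (Prod.ext_iff (x := (i, w))).symm
  simp [coronaLabeling, weight_extend coronaEdge_injective edgeSet_starCorona,
    Fintype.sum_sum_type, coronaEdge, spoke_injective.eq_iff, hiw]

variable {t a b}

lemma isLocalAntimagic_coronaLabeling (i₀ : Fin k) (w₀ : Fin r)
    (hinj : Injective (Sum.elim t (Sum.elim a b)))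
    (hmem : ∀ x, Sum.elim t (Sum.elim a b) x ∈ Set.Icc 1 (k + (k * r + k * r)))
    {Y P : ℕ} (hY : ∀ i, t i + ∑ w, b (i, w) = Y) (hP : ∀ p, a p + b p = P)
    (hcY : ∑ i, t i + ∑ p, a p ≠ Y) (hcP : ∑ i, t i + ∑ p, a p ≠ P) (hYP : Y ≠ P) :
    IsLocalAntimagic (starCorona k r) (coronaLabeling t a b) ∧
      colorCount (starCorona k r) (coronaLabeling t a b) = 3 := by
  have hbij := bijOn_extend coronaEdge_injective edgeSet_starCorona hinj (by simpa using hmem)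
  refine ⟨⟨hbij, weight_ne_of_adj_starCorona ?_ ?_ ?_⟩, ?_⟩
  · simpa [weight_center, weight_leaf, hY] using fun _ => hcY
  · simpa [weight_center, weight_apex, hP] using fun _ _ => hcP
  · simpa [weight_leaf, weight_apex, hY, hP] using fun _ _ => hYP
  have himage : univ.image (weight (starCorona k r) (coronaLabeling t a b)) =
      {∑ i, t i + ∑ p, a p, Y, P} := by
    ext n
    simp only [mem_image, mem_univ, true_and, mem_insert, mem_singleton]
    constructor
    · rintro ⟨v, rfl⟩
      rcases starCoronaVertex_cases v with rfl | ⟨i, rfl⟩ | ⟨i, w, rfl⟩ <;>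
        simp [weight_center, weight_leaf, weight_apex, hY, hP]
    · rintro (rfl | rfl | rfl)
      exacts [⟨center, weight_center t a b⟩,
        ⟨leaf i₀, (weight_leaf t a b i₀).trans (hY i₀)⟩,
        ⟨apex i₀ w₀, (weight_apex t a b i₀ w₀).trans (hP _)⟩]
  rw [colorCount, himage]
  exact card_eq_three.mpr ⟨_, _, _, hcY, hcP, hYP, rfl⟩

end StarCorona

section Labels

def pairLabel (M c : ℕ) (low : Prop) [Decidable low] : ℕ := if low then c else 2 * M + 1 - c

lemma pairLabel_add_pairLabel_not {M c : ℕ} (hc : c ≤ M) (low : Prop) [Decidable low] :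
    pairLabel M c low + pairLabel M c (¬low) = 2 * M + 1 := by
  unfold pairLabel
  split_ifs <;> omega

lemma pairLabel_mem {M c : ℕ} (hc : c ∈ Set.Icc 1 M) (low : Prop) [Decidable low] :
    pairLabel M c low ∈ Set.Icc 1 (2 * M) := by
  obtain ⟨h1, h2⟩ := hc
  unfold pairLabel
  split_ifs <;> constructor <;> omega

lemma pairLabel_inj {M c c' : ℕ} (hc : c ∈ Set.Icc 1 M) (hc' : c' ∈ Set.Icc 1 M)
    {low low' : Prop} [Decidable low] [Decidable low']
    (h : pairLabel M c low = pairLabel M c' low') : c = c' ∧ (low ↔ low') := by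
  obtain ⟨h1, h2⟩ := hc
  obtain ⟨h1', h2'⟩ := hc'
  unfold pairLabel at h
  split_ifs at h <;> first | omega | exact ⟨by omega, by tauto⟩

variable (k r : ℕ) {i i' j j' p q : ℕ}

def slot (i j : ℕ) : ℕ :=
  if j + 1 ≠ r then i
  else if Even j then k - 1 - i
  else if 2 * i + 1 < k then 2 * i + 1 else 2 * (k - 1 - i)

def cell (i j : ℕ) : ℕ := slot k r i j + k * j + 1

def IsLow (i j : ℕ) : Prop := Even j ∨ (j + 1 = r ∧ k ≤ 2 * i + 1)

def leafLabel (i j : ℕ) : ℕ := pairLabel (k * r) (cell k r i j) (IsLow k r i j)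

def centerLabel (i j : ℕ) : ℕ := pairLabel (k * r) (cell k r i j) (¬IsLow k r i j)

def spokeLabel (i : ℕ) : ℕ := 2 * (k * r) + 1 + i

def leafWeight (i : ℕ) : ℕ := spokeLabel k r i + ∑ j ∈ range r, leafLabel k r i j

def centerWeight : ℕ :=
  ∑ i ∈ range k, spokeLabel k r i + ∑ i ∈ range k, ∑ j ∈ range r, centerLabel k r i j

variable {k r}

lemma slot_lt (hi : i < k) : slot k r i j < k := by
  unfold slot
  split_ifs <;> omega

lemma slot_inj (hi : i < k) (hi' : i' < k) (h : slot k r i j = slot k r i' j) : i = i' := by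
  unfold slot at h
  split_ifs at h <;> omega

lemma cell_mem (hi : i < k) (hj : j < r) : cell k r i j ∈ Set.Icc 1 (k * r) := by
  have hjk : k * j + k ≤ k * r := by nlinarith
  have := slot_lt (r := r) (j := j) hi
  exact ⟨by simp [cell], by unfold cell; omega⟩

lemma cell_inj (hi : i < k) (hi' : i' < k) (h : cell k r i j = cell k r i' j') :
    i = i' ∧ j = j' := by
  have hs := slot_lt (r := r) (j := j) hi
  have hs' := slot_lt (r := r) (j := j') hi'
  have hk : 0 < k := by omega
  have h' : slot k r i j + k * j = slot k r i' j' + k * j' := by unfold cell at h; omega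
  have hj : j = j' := by
    simpa [Nat.add_mul_div_left _ _ hk, Nat.div_eq_of_lt hs, Nat.div_eq_of_lt hs'] using
      congrArg (· / k) h'
  subst hj
  exact ⟨slot_inj (r := r) (j := j) hi hi' (by omega), rfl⟩

lemma leafLabel_mem (hi : i < k) (hj : j < r) : leafLabel k r i j ∈ Set.Icc 1 (2 * (k * r)) :=
  pairLabel_mem (cell_mem hi hj) _

lemma centerLabel_mem (hi : i < k) (hj : j < r) :
    centerLabel k r i j ∈ Set.Icc 1 (2 * (k * r)) :=
  pairLabel_mem (cell_mem hi hj) _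

lemma leafLabel_add_centerLabel (hi : i < k) (hj : j < r) :
    leafLabel k r i j + centerLabel k r i j = 2 * (k * r) + 1 :=
  pairLabel_add_pairLabel_not (cell_mem hi hj).2 _

lemma leafLabel_add_leafLabel_succ (hi : i < k) (hp : 2 * p + 2 < r) :
    leafLabel k r i (2 * p) + leafLabel k r i (2 * p + 1) = 2 * (k * r) + 1 - k := by
  have hs₀ : slot k r i (2 * p) = i := if_pos (by omega)
  have hs₁ : slot k r i (2 * p + 1) = i := if_pos (by omega)
  have hl₀ : IsLow k r i (2 * p) := .inl (even_two_mul p)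
  have hl₁ : ¬IsLow k r i (2 * p + 1) := by
    rintro (h | ⟨h, -⟩)
    · exact Nat.not_even_two_mul_add_one p h
    · omega
  have hk : k * (2 * p + 1) = k * (2 * p) + k := by ring
  have hkr : k * (2 * p + 1) + k ≤ k * r := by nlinarith
  simp only [leafLabel, pairLabel, cell, hs₀, hs₁, if_pos hl₀, if_neg hl₁]
  omega

lemma sum_range_two_mul_leafLabel (hi : i < k) (hq : 2 * q < r) :
    ∑ j ∈ range (2 * q), leafLabel k r i j = q * (2 * (k * r) + 1 - k) := by
  induction q with
  | zero => simp
  | succ q ih =>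
    rw [show 2 * (q + 1) = 2 * q + 1 + 1 by ring, sum_range_succ, sum_range_succ, add_assoc,
      ih (by omega), leafLabel_add_leafLabel_succ hi (by omega), add_one_mul]

lemma leafWeight_odd (hi : i < k) :
    leafWeight k (2 * q + 1) i =
      3 * (k * (2 * q + 1)) + 1 + q * (2 * (k * (2 * q + 1)) + 1 - k) := by
  have hs : slot k (2 * q + 1) i (2 * q) = k - 1 - i := by simp [slot]
  have hl : IsLow k (2 * q + 1) i (2 * q) := .inl (even_two_mul q)
  have hk : k * (2 * q + 1) = k * (2 * q) + k := by ring
  rw [leafWeight, sum_range_succ, sum_range_two_mul_leafLabel hi (by omega)]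
  simp only [leafLabel, pairLabel, cell, spokeLabel, hs, if_pos hl]
  omega

lemma leafWeight_even (hi : i < k) :
    leafWeight k (2 * q + 2) i =
      4 * (k * (2 * q + 2)) + 1 - k + q * (2 * (k * (2 * q + 2)) + 1 - k) := by
  have hs₀ : slot k (2 * q + 2) i (2 * q) = i := if_pos (by omega)
  have hl₀ : IsLow k (2 * q + 2) i (2 * q) := .inl (even_two_mul q)
  have hodd : ¬Even (2 * q + 1) := Nat.not_even_two_mul_add_one q
  have hk₁ : k * (2 * q + 1) = k * (2 * q) + k := by ring
  have hk₂ : k * (2 * q + 2) = k * (2 * q) + 2 * k := by ring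
  rw [leafWeight, sum_range_succ, sum_range_succ, sum_range_two_mul_leafLabel hi (by omega)]
  simp only [leafLabel, pairLabel, cell, spokeLabel, hs₀, if_pos hl₀]
  by_cases hik : 2 * i + 1 < k
  · have hs₁ : slot k (2 * q + 2) i (2 * q + 1) = 2 * i + 1 := by simp [slot, hodd, hik]
    have hl₁ : ¬IsLow k (2 * q + 2) i (2 * q + 1) := by simp [IsLow, hodd]; omega
    rw [hs₁, if_neg hl₁]
    omega
  · have hs₁ : slot k (2 * q + 2) i (2 * q + 1) = 2 * (k - 1 - i) := by simp [slot, hodd, hik]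
    have hl₁ : IsLow k (2 * q + 2) i (2 * q + 1) := .inr ⟨rfl, by omega⟩
    rw [hs₁, if_pos hl₁]
    omega

lemma exists_eq_two_mul_add_one_or_two (hr : 0 < r) : ∃ q, r = 2 * q + 1 ∨ r = 2 * q + 2 :=
  ⟨(r - 1) / 2, by omega⟩

lemma leafWeight_eq_leafWeight_zero (hi : i < k) (hr : 0 < r) :
    leafWeight k r i = leafWeight k r 0 := by
  obtain ⟨q, rfl | rfl⟩ := exists_eq_two_mul_add_one_or_two hr
  · rw [leafWeight_odd hi, leafWeight_odd (by omega)]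
  · rw [leafWeight_even hi, leafWeight_even (by omega)]

lemma two_mul_add_one_lt_leafWeight (hk : 0 < k) (hr : 0 < r) :
    2 * (k * r) + 1 < leafWeight k r 0 := by
  have hpos : 0 < ∑ j ∈ range r, leafLabel k r 0 j :=
    sum_pos (fun j hj => (leafLabel_mem hk (mem_range.mp hj)).1) (nonempty_range_iff.mpr hr.ne')
  simp only [leafWeight, spokeLabel]
  omega

lemma sum_leafLabel_lt_sum_centerLabel (hk : 0 < k) (hr : 0 < r) :
    ∑ j ∈ range r, leafLabel k r 0 j < ∑ j ∈ range r, centerLabel k r 0 j := by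
  have htotal : ∑ j ∈ range r, leafLabel k r 0 j + ∑ j ∈ range r, centerLabel k r 0 j =
      r * (2 * (k * r) + 1) := by
    rw [← sum_add_distrib,
      sum_congr rfl fun j hj => leafLabel_add_centerLabel hk (mem_range.mp hj)]
    simp
  have hleaf : leafWeight k r 0 = 2 * (k * r) + 1 + ∑ j ∈ range r, leafLabel k r 0 j := rfl
  obtain ⟨q, rfl | rfl⟩ := exists_eq_two_mul_add_one_or_two hr
  · rw [leafWeight_odd hk] at hleaf
    have : q * (2 * (k * (2 * q + 1)) + 1 - k) ≤ q * (2 * (k * (2 * q + 1)) + 1) :=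
      Nat.mul_le_mul_left q (Nat.sub_le _ _)
    have : (2 * q + 1) * (2 * (k * (2 * q + 1)) + 1) =
        2 * (q * (2 * (k * (2 * q + 1)) + 1)) + 2 * (k * (2 * q + 1)) + 1 := by ring
    omega
  · rw [leafWeight_even hk] at hleaf
    have : q * (2 * (k * (2 * q + 2)) + 1 - k) ≤ q * (2 * (k * (2 * q + 2)) + 1) :=
      Nat.mul_le_mul_left q (Nat.sub_le _ _)
    have : (2 * q + 2) * (2 * (k * (2 * q + 2)) + 1) =
        2 * (q * (2 * (k * (2 * q + 2)) + 1)) + 4 * (k * (2 * q + 2)) + 2 := by ring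
    omega

lemma leafWeight_lt_centerWeight (hk : 0 < k) (hr : 0 < r) :
    leafWeight k r 0 < centerWeight k r :=
  calc leafWeight k r 0
      < spokeLabel k r 0 + ∑ j ∈ range r, centerLabel k r 0 j :=
        Nat.add_lt_add_left (sum_leafLabel_lt_sum_centerLabel hk hr) _
    _ ≤ centerWeight k r :=
        add_le_add (single_le_sum (fun _ _ => Nat.zero_le _) (mem_range.mpr hk))
          (single_le_sum (f := fun i => ∑ j ∈ range r, centerLabel k r i j)
            (fun _ _ => Nat.zero_le _) (mem_range.mpr hk))

end Labels

section Construction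

variable {k r : ℕ}

def starCoronaLabels (k r : ℕ) : Fin k ⊕ (Fin k × Fin r) ⊕ (Fin k × Fin r) → ℕ :=
  Sum.elim (fun i => spokeLabel k r i)
    (Sum.elim (fun p => centerLabel k r p.1 p.2) (fun p => leafLabel k r p.1 p.2))

lemma injective_starCoronaLabels : Injective (starCoronaLabels k r) := by
  have hpair {p p' : Fin k × Fin r} {low low' : Prop} [Decidable low] [Decidable low']
      (h : pairLabel (k * r) (cell k r p.1 p.2) low = pairLabel (k * r) (cell k r p'.1 p'.2) low') :
      p = p' ∧ (low ↔ low') := by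
    obtain ⟨hc, hlow⟩ := pairLabel_inj (cell_mem p.1.2 p.2.2) (cell_mem p'.1.2 p'.2.2) h
    obtain ⟨hi, hj⟩ := cell_inj p.1.2 p'.1.2 hc
    exact ⟨Prod.ext (Fin.ext hi) (Fin.ext hj), hlow⟩
  refine Injective.sumElim (fun i i' h => Fin.ext ?_)
    (Injective.sumElim (fun p p' h => (hpair h).1) (fun p p' h => (hpair h).1) ?_) ?_
  · simpa [spokeLabel] using h
  · intro p p' h
    obtain ⟨rfl, hlow⟩ := hpair h
    exact not_iff_self hlow
  · rintro i (p | p) h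
    · have := (centerLabel_mem p.1.2 p.2.2).2
      simp only [Sum.elim_inl, spokeLabel] at h
      omega
    · have := (leafLabel_mem p.1.2 p.2.2).2
      simp only [Sum.elim_inr, spokeLabel] at h
      omega

lemma starCoronaLabels_mem (x : Fin k ⊕ (Fin k × Fin r) ⊕ (Fin k × Fin r)) :
    starCoronaLabels k r x ∈ Set.Icc 1 (k + (k * r + k * r)) := by
  rcases x with i | p | p
  · simp only [starCoronaLabels, Sum.elim_inl, spokeLabel, Set.mem_Icc]
    omega
  · have := centerLabel_mem p.1.2 p.2.2
    simp only [starCoronaLabels, Sum.elim_inr, Sum.elim_inl, Set.mem_Icc] at this ⊢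
    omega
  · have := leafLabel_mem p.1.2 p.2.2
    simp only [starCoronaLabels, Sum.elim_inr, Set.mem_Icc] at this ⊢
    omega

lemma spokeLabel_add_sum_leafLabel (i : Fin k) :
    spokeLabel k r i + ∑ w : Fin r, leafLabel k r i w = leafWeight k r i := by
  rw [Fin.sum_univ_eq_sum_range (leafLabel k r i ·) r, leafWeight]

lemma centerWeight_eq_sum_fin :
    centerWeight k r =
      ∑ i : Fin k, spokeLabel k r i + ∑ p : Fin k × Fin r, centerLabel k r p.1 p.2 := by
  rw [centerWeight, Fintype.sum_prod_type, Fin.sum_univ_eq_sum_range (spokeLabel k r ·),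
    ← Fin.sum_univ_eq_sum_range (fun i => ∑ j ∈ range r, centerLabel k r i j)]
  exact congrArg _
    (sum_congr rfl fun i _ => (Fin.sum_univ_eq_sum_range (centerLabel k r i ·) r).symm)

end Construction

/-- For all integers `k ≥ 1` and `r ≥ 1`, the local antimagic chromatic number
of the edge-corona product of the star `S_k` with the empty graph on `r`
vertices equals 3: `χ_la(S_k ⋄ K̄_r) = 3`. -/
theorem chiLA_star_edgeCorona_empty {k r : ℕ} (hk : 1 ≤ k) (hr : 1 ≤ r) :
    chiLA (edgeCorona (star k) (⊥ : SimpleGraph (Fin r))) = 3 := by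
  have hleaf := two_mul_add_one_lt_leafWeight hk hr
  have hcenter := centerWeight_eq_sum_fin (k := k) (r := r) ▸ leafWeight_lt_centerWeight hk hr
  obtain ⟨hf, hcount⟩ := isLocalAntimagic_coronaLabeling ⟨0, hk⟩ ⟨0, hr⟩
    injective_starCoronaLabels starCoronaLabels_mem
    (fun i => (spokeLabel_add_sum_leafLabel i).trans (leafWeight_eq_leafWeight_zero i.2 hr))
    (fun p => (add_comm _ _).trans (leafLabel_add_centerLabel p.1.2 p.2.2))
    hcenter.ne' (hleaf.trans hcenter).ne' hleaf.ne'
  exact chiLA_eq_of_forall_le hf hcount fun g hg =>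
    three_le_colorCount_starCorona ⟨0, hk⟩ ⟨0, hr⟩ hg.2

end LocalAntimagic
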